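/- Let T be a finite tree with at least two vertices, equipped with an edge-length function ℓ assigning a strictly positive real length to each edge, and suppose (T, ℓ) is short-branched. Then for every pair of distinct vertices u, v of T, the deviation D(u,v) is strictly less than one. -/

import Mathlib

open scoped Classical
open Finset

noncomputable section

variable {V : Type*}

/-- A leaf of a graph is a vertex of degree one. -/
def IsLeafVertex [Fintype V] (G : SimpleGraph V) (v : V) : Prop := G.degree v = 1

/-- The finset of leaves of a graph. -/
def leafSet [Fintype V] (G : SimpleGraph V) : Finset V :=
  Finset.univ.filter (fun v => IsLeafVertex G v)

/-- The length of a pseudometric graph: the sum of the lengths of its edges. -/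
def totalLength [Fintype V] (G : SimpleGraph V) (ℓ : Sym2 V → ℝ) : ℝ :=
  ∑ e ∈ G.edgeFinset, ℓ e

/-- The leaf length of a tree: one less than its number of leaves. -/
def leafLength [Fintype V] (G : SimpleGraph V) : ℝ := ((leafSet G).card : ℝ) - 1

/-- `sideComp G u v` is the vertex set of the connected component containing `v` of the
graph obtained from `G` by deleting the vertex `u`: the set of vertices reachable from
`v` by a walk avoiding `u`. -/
def sideComp (G : SimpleGraph V) (u v : V) : Set V :=
  {x | ∃ p : G.Walk v x, u ∉ p.support}

/-- The length of the subspace `T(u,v)`: the sum of the lengths of all edges having at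
least one endpoint in `sideComp G u v`. -/
def sideLength [Fintype V] (G : SimpleGraph V) (ℓ : Sym2 V → ℝ) (u v : V) : ℝ :=
  ∑ e ∈ G.edgeFinset.filter (fun e => ∃ x ∈ e, x ∈ sideComp G u v), ℓ e

/-- The leaf length of the subspace `T(u,v)`: the number of leaves of `G` lying in
`sideComp G u v`. -/
def sideLeafCount [Fintype V] (G : SimpleGraph V) (u v : V) : ℕ :=
  ((leafSet G).filter (fun x => x ∈ sideComp G u v)).card

/-- The deviation `D(u,v)`: the leaf length of `T(u,v)` minus the length of `T(u,v)`. -/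
def deviation [Fintype V] (G : SimpleGraph V) (ℓ : Sym2 V → ℝ) (u v : V) : ℝ :=
  (sideLeafCount G u v : ℝ) - sideLength G ℓ u v

/-- The length of the branch at `(u,w)`: `ℓ {u,w}` plus the sum of the lengths of all
edges with both endpoints in `sideComp G u w`. -/
def branchLength [Fintype V] (G : SimpleGraph V) (ℓ : Sym2 V → ℝ) (u w : V) : ℝ :=
  ℓ s(u, w) + ∑ e ∈ G.edgeFinset.filter (fun e => ∀ x ∈ e, x ∈ sideComp G u w), ℓ e

/-- A pseudometric tree is short-branched if its length equals its leaf length and the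
length of every branch (at a vertex of degree at least 3) is at most its leaf length. -/
def ShortBranched [Fintype V] (G : SimpleGraph V) (ℓ : Sym2 V → ℝ) : Prop :=
  totalLength G ℓ = leafLength G ∧
  ∀ u w : V, 3 ≤ G.degree u → G.Adj u w →
    branchLength G ℓ u w ≤ (sideLeafCount G u w : ℝ)

/-- The product of the factors `D(vᵢ, vᵢ₊₁)/(1 − D(vᵢ₊₁, vᵢ))` along a list of vertices;
applied to the support of the unique path from `v` to `w` this gives the barycentric
coordinate `a(v,w)`. -/
def pathProd [Fintype V] (G : SimpleGraph V) (ℓ : Sym2 V → ℝ) : List V → ℝ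
  | a :: b :: rest =>
      (deviation G ℓ a b / (1 - deviation G ℓ b a)) * pathProd G ℓ (b :: rest)
  | _ => 1

/-!
For an edge `uw` of the tree, the components of `T - u` containing `w` and of `T - w` containing
`u` partition the vertices, so condition (1) yields `D(u,w) + D(w,u) = 1 - ℓ(uw)`. One then shows
`D(u,w) ≤ 1 - ℓ(uw)` by induction on the size of the component of `w`: equality holds when `w`
is a leaf, `D(u,w) = D(w,w') - ℓ(uw)` when `w` has degree two with other neighbour `w'`, and when
`w` has degree at least three condition (2) says exactly that `D(w,u) ≥ 0`. Finally `D(u,v)`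
equals `D(u,w)` for the neighbour `w` of `u` on the path to `v`, and `ℓ(uw) > 0`.
-/

open SimpleGraph

section SideComp

variable {G : SimpleGraph V} {u v w x y : V}

lemma mem_sideComp_self (G : SimpleGraph V) (h : u ≠ v) : v ∈ sideComp G u v :=
  ⟨.nil, by simpa using h⟩

lemma notMem_sideComp (G : SimpleGraph V) (u v : V) : u ∉ sideComp G u v :=
  fun ⟨p, hp⟩ => hp p.end_mem_support

lemma mem_sideComp_iff_path : x ∈ sideComp G u v ↔ ∃ p : G.Walk v x, p.IsPath ∧ u ∉ p.support :=
  ⟨fun ⟨p, hp⟩ => ⟨p.bypass, p.bypass_isPath, fun h => hp (p.support_bypass_subset_support h)⟩,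
    fun ⟨p, _, hp⟩ => ⟨p, hp⟩⟩

lemma mem_sideComp_of_adj (hx : x ∈ sideComp G u v) (hxy : G.Adj x y) (hy : y ≠ u) :
    y ∈ sideComp G u v := by
  obtain ⟨p, hp⟩ := hx
  refine ⟨p.concat hxy, ?_⟩
  simp only [Walk.support_concat, List.mem_append, List.mem_singleton, not_or]
  exact ⟨hp, hy.symm⟩

lemma mem_sideComp_of_mem_support (p : G.Walk v x) (hp : u ∉ p.support) (hy : y ∈ p.support) :
    y ∈ sideComp G u v :=
  ⟨p.takeUntil y hy, fun h => hp (p.support_takeUntil_subset_support hy h)⟩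

lemma sideComp_eq_of_mem (hx : x ∈ sideComp G u v) : sideComp G u x = sideComp G u v := by
  obtain ⟨p, hp⟩ := hx
  ext y
  constructor
  · rintro ⟨q, hq⟩
    exact ⟨p.append q, by simp [Walk.mem_support_append_iff, hp, hq]⟩
  · rintro ⟨q, hq⟩
    exact ⟨p.reverse.append q, by simp [Walk.mem_support_append_iff, hp, hq]⟩

lemma sideComp_subset_sideComp_of_notMem (hu : u ∉ sideComp G v w) :
    sideComp G v w ⊆ sideComp G u w :=
  fun _ ⟨p, hp⟩ => ⟨p, fun h => hu (mem_sideComp_of_mem_support p hp h)⟩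

lemma exists_adj_mem_sideComp (hG : G.Connected) (huv : u ≠ v) :
    ∃ w, G.Adj u w ∧ v ∈ sideComp G u w := by
  obtain ⟨p, hp⟩ : ∃ p : G.Walk u v, p.IsPath := ⟨_, (hG.preconnected u v).some.bypass_isPath⟩
  cases p with
  | nil => exact absurd rfl huv
  | cons h q => exact ⟨_, h, q, ((Walk.cons_isPath_iff _ _).1 hp).2⟩

lemma mem_sideComp_or_mem_sideComp_swap (hG : G.Preconnected) (huw : u ≠ w) (x : V) :
    x ∈ sideComp G u w ∨ x ∈ sideComp G w u := by
  obtain ⟨p⟩ := hG x w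
  induction p with
  | nil => exact .inl (mem_sideComp_self G huw)
  | @cons x y w hxy _ ih =>
    rcases ih huw with hy | hy
    · by_cases hx : x = u
      · subst hx; exact .inr (mem_sideComp_self G huw.symm)
      · exact .inl (mem_sideComp_of_adj hy hxy.symm hx)
    · by_cases hx : x = w
      · subst hx; exact .inl (mem_sideComp_self G huw)
      · exact .inr (mem_sideComp_of_adj hy hxy.symm hx)

end SideComp

section Tree

variable {G : SimpleGraph V} {u v w x a b : V}

lemma notMem_sideComp_swap (hT : G.IsTree) (h : G.Adj u w) (hx : x ∈ sideComp G u w) :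
    x ∉ sideComp G w u := by
  intro hx'
  obtain ⟨q, hq, hqu⟩ := mem_sideComp_iff_path.1 hx
  obtain ⟨r, hr, hrw⟩ := mem_sideComp_iff_path.1 hx'
  have hpath : (Walk.cons h q).IsPath := (Walk.cons_isPath_iff _ _).2 ⟨hq, hqu⟩
  obtain rfl := (hT.existsUnique_path u x).unique hpath hr
  simp at hrw

lemma sideComp_swap_eq_compl (hT : G.IsTree) (h : G.Adj u w) :
    sideComp G w u = (sideComp G u w)ᶜ := by
  ext x
  refine ⟨fun hx hx' => notMem_sideComp_swap hT h hx' hx, fun hx => ?_⟩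
  exact (mem_sideComp_or_mem_sideComp_swap hT.connected.preconnected h.ne x).resolve_left hx

lemma eq_and_eq_of_adj_of_mem_sideComp_of_notMem (hT : G.IsTree) (h : G.Adj u w)
    (hab : G.Adj a b) (ha : a ∈ sideComp G u w) (hb : b ∉ sideComp G u w) : a = w ∧ b = u := by
  obtain rfl : b = u := by
    by_contra hbu
    exact hb (mem_sideComp_of_adj ha hab hbu)
  refine ⟨?_, rfl⟩
  by_contra haw
  exact notMem_sideComp_swap hT h ha (mem_sideComp_of_adj (mem_sideComp_self G h.ne') hab.symm haw)

lemma notMem_sideComp_of_adj_of_adj (hT : G.IsTree) (hu : G.Adj w u) (hv : G.Adj w v)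
    (huv : u ≠ v) : u ∉ sideComp G w v := by
  rw [← Set.mem_compl_iff, ← sideComp_swap_eq_compl hT hv]
  exact mem_sideComp_of_adj (mem_sideComp_self G hv.ne') hu huv

lemma sideComp_eq_insert_of_adj_iff (hT : G.IsTree) (huv : u ≠ v)
    (hN : ∀ y, G.Adj w y ↔ y = u ∨ y = v) : sideComp G u w = insert w (sideComp G w v) := by
  have hwu : G.Adj w u := (hN u).2 (.inl rfl)
  have hwv : G.Adj w v := (hN v).2 (.inr rfl)
  ext x
  constructor
  · intro hx
    obtain ⟨p, hp, hpu⟩ := mem_sideComp_iff_path.1 hx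
    cases p with
    | nil => exact Set.mem_insert _ _
    | cons hwy q =>
      rw [Walk.cons_isPath_iff] at hp
      rw [Walk.support_cons, List.mem_cons, not_or] at hpu
      obtain rfl := ((hN _).1 hwy).resolve_left fun hyu => hpu.2 (hyu ▸ q.start_mem_support)
      exact .inr ⟨q, hp.2⟩
  · rintro (rfl | hx)
    · exact mem_sideComp_self G hwu.ne'
    · rw [← sideComp_eq_of_mem (mem_sideComp_of_adj (mem_sideComp_self G hwu.ne') hwv huv.symm)]
      exact sideComp_subset_sideComp_of_notMem (notMem_sideComp_of_adj_of_adj hT hwu hwv huv) hx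

variable [Fintype V] (ℓ : Sym2 V → ℝ)

lemma sideLength_eq_branchLength (hT : G.IsTree) (h : G.Adj u w) :
    sideLength G ℓ u w = branchLength G ℓ u w := by
  have hnot : s(u, w) ∉ G.edgeFinset.filter (fun e => ∀ x ∈ e, x ∈ sideComp G u w) := by
    simp [notMem_sideComp]
  rw [sideLength, branchLength, ← Finset.sum_insert hnot]
  congr 1
  ext e
  induction e using Sym2.ind with
  | _ a b =>
    simp only [mem_filter, mem_insert, mem_edgeFinset, mem_edgeSet, Sym2.mem_iff,
      forall_eq_or_imp, exists_eq_or_imp, forall_eq, exists_eq_left]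
    have hw := mem_sideComp_self G h.ne
    constructor
    · rintro ⟨hab, ha | hb⟩
      · by_cases hb : b ∈ sideComp G u w
        · exact .inr ⟨hab, ha, hb⟩
        · obtain ⟨rfl, rfl⟩ := eq_and_eq_of_adj_of_mem_sideComp_of_notMem hT h hab ha hb
          exact .inl Sym2.eq_swap
      · by_cases ha : a ∈ sideComp G u w
        · exact .inr ⟨hab, ha, hb⟩
        · obtain ⟨rfl, rfl⟩ := eq_and_eq_of_adj_of_mem_sideComp_of_notMem hT h hab.symm hb ha
          exact .inl rfl
    · rintro (he | ⟨hab, ha, -⟩)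
      · rcases Sym2.eq_iff.1 he with ⟨rfl, rfl⟩ | ⟨rfl, rfl⟩
        exacts [⟨h, .inr hw⟩, ⟨h.symm, .inl hw⟩]
      · exact ⟨hab, .inl ha⟩

lemma sideLength_add_sideLength_swap (hT : G.IsTree) (h : G.Adj u w) :
    sideLength G ℓ u w + sideLength G ℓ w u = totalLength G ℓ + ℓ s(u, w) := by
  rw [sideLength_eq_branchLength ℓ hT h, branchLength, sideLength, sideComp_swap_eq_compl hT h,
    totalLength, ← Finset.sum_filter_add_sum_filter_not G.edgeFinset
      (fun e => ∀ x ∈ e, x ∈ sideComp G u w)]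
  simp only [Set.mem_compl_iff, not_forall, exists_prop]
  ring

lemma sideLeafCount_add_sideLeafCount_swap (hT : G.IsTree) (h : G.Adj u w) :
    sideLeafCount G u w + sideLeafCount G w u = #(leafSet G) := by
  rw [sideLeafCount, sideLeafCount, sideComp_swap_eq_compl hT h]
  convert Finset.card_filter_add_card_filter_not (s := leafSet G) (· ∈ sideComp G u w)

lemma deviation_add_deviation_swap (hT : G.IsTree) (h : G.Adj u w)
    (hlen : totalLength G ℓ = leafLength G) :
    deviation G ℓ u w + deviation G ℓ w u = 1 - ℓ s(u, w) := by
  have hleaf : (sideLeafCount G u w : ℝ) + sideLeafCount G w u = #(leafSet G) := by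
    exact_mod_cast sideLeafCount_add_sideLeafCount_swap hT h
  have hside := sideLength_add_sideLength_swap ℓ hT h
  rw [leafLength] at hlen
  rw [deviation, deviation]
  linarith

lemma mem_leafSet : v ∈ leafSet G ↔ G.degree v = 1 := by
  rw [leafSet, mem_filter]
  exact and_iff_right (mem_univ v)

lemma sideComp_eq_singleton_of_degree_eq_one (h : G.Adj u w) (hd : G.degree w = 1) :
    sideComp G u w = {w} := by
  refine Set.eq_singleton_iff_unique_mem.2 ⟨mem_sideComp_self G h.ne, ?_⟩
  rintro x ⟨_ | ⟨hwy, q⟩, hq⟩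
  · rfl
  · obtain ⟨z, -, hz⟩ := degree_eq_one_iff_existsUnique_adj.1 hd
    obtain rfl := (hz _ hwy).trans (hz _ h.symm).symm
    simp at hq

lemma deviation_of_degree_eq_one (hT : G.IsTree) (h : G.Adj u w) (hd : G.degree w = 1) :
    deviation G ℓ u w = 1 - ℓ s(u, w) := by
  have hside := sideComp_eq_singleton_of_degree_eq_one h hd
  have hleaf : sideLeafCount G u w = 1 := by
    rw [sideLeafCount, hside, card_eq_one]
    refine ⟨w, ?_⟩
    ext x
    simp only [mem_filter, mem_leafSet, Set.mem_singleton_iff, mem_singleton, and_iff_right_iff_imp]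
    rintro rfl
    exact hd
  have hloop : G.edgeFinset.filter (fun e => ∀ x ∈ e, x ∈ sideComp G u w) = ∅ := by
    refine Finset.filter_false_of_mem fun e he hall => ?_
    induction e using Sym2.ind with
    | _ a b =>
      simp only [hside, Set.mem_singleton_iff, Sym2.mem_iff, forall_eq_or_imp, forall_eq] at hall
      rw [hall.1, hall.2, mem_edgeFinset, mem_edgeSet] at he
      exact G.irrefl he
  rw [deviation, sideLength_eq_branchLength ℓ hT h, branchLength, hleaf, hloop, sum_empty]
  push_cast
  ring

lemma exists_adj_iff_of_degree_eq_two (h : G.Adj w u) (hd : G.degree w = 2) :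
    ∃ v, u ≠ v ∧ ∀ y, G.Adj w y ↔ y = u ∨ y = v := by
  obtain ⟨a, b, hab, hN⟩ := card_eq_two.1 hd
  have hadj (y : V) : G.Adj w y ↔ y = a ∨ y = b := by
    rw [← mem_neighborFinset, hN, mem_insert, mem_singleton]
  rcases (hadj u).1 h with rfl | rfl
  · exact ⟨b, hab, hadj⟩
  · exact ⟨a, hab.symm, fun y => (hadj y).trans or_comm⟩

lemma deviation_eq_deviation_sub_of_adj_iff (hT : G.IsTree) (huv : u ≠ v)
    (hN : ∀ y, G.Adj w y ↔ y = u ∨ y = v) :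
    deviation G ℓ u w = deviation G ℓ w v - ℓ s(u, w) := by
  have hwu : G.Adj w u := (hN u).2 (.inl rfl)
  have hwv : G.Adj w v := (hN v).2 (.inr rfl)
  have hS := sideComp_eq_insert_of_adj_iff hT huv hN
  have hleaf : sideLeafCount G u w = sideLeafCount G w v := by
    have hw : w ∉ leafSet G := by
      rw [mem_leafSet, degree_eq_one_iff_existsUnique_adj]
      rintro ⟨z, -, hz⟩
      exact huv ((hz u hwu).trans (hz v hwv).symm)
    rw [sideLeafCount, sideLeafCount, hS]
    refine congrArg card (Finset.ext fun x => ?_)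
    simp only [mem_filter, Set.mem_insert_iff, and_congr_right_iff]
    exact fun hx => or_iff_right (ne_of_mem_of_not_mem hx hw)
  have hlen : sideLength G ℓ u w = sideLength G ℓ w v + ℓ s(u, w) := by
    have hnot : s(u, w) ∉ G.edgeFinset.filter (fun e => ∃ x ∈ e, x ∈ sideComp G w v) := by
      simp [notMem_sideComp, notMem_sideComp_of_adj_of_adj hT hwu hwv huv]
    rw [sideLength, sideLength, hS, add_comm, ← sum_insert hnot]
    congr 1
    ext e
    induction e using Sym2.ind with
    | _ a b =>
      simp only [mem_filter, mem_insert, mem_edgeFinset, mem_edgeSet, Sym2.mem_iff,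
        exists_eq_or_imp, exists_eq_left, Set.mem_insert_iff]
      constructor
      · rintro ⟨hab, (rfl | ha) | (rfl | hb)⟩
        · rcases (hN b).1 hab with rfl | rfl
          exacts [.inl Sym2.eq_swap, .inr ⟨hab, .inr (mem_sideComp_self G hwv.ne)⟩]
        · exact .inr ⟨hab, .inl ha⟩
        · rcases (hN a).1 hab.symm with rfl | rfl
          exacts [.inl rfl, .inr ⟨hab, .inl (mem_sideComp_self G hwv.ne)⟩]
        · exact .inr ⟨hab, .inr hb⟩
      · rintro (he | ⟨hab, hX⟩)
        · rcases Sym2.eq_iff.1 he with ⟨rfl, rfl⟩ | ⟨rfl, rfl⟩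
          exacts [⟨hwu.symm, .inr (.inl rfl)⟩, ⟨hwu, .inl (.inl rfl)⟩]
        · exact ⟨hab, hX.imp .inr .inr⟩
  rw [deviation, deviation, hleaf, hlen]
  ring

lemma deviation_le_one_sub (hT : G.IsTree) (hℓ : ∀ e ∈ G.edgeSet, 0 ≤ ℓ e)
    (hsb : ShortBranched G ℓ) (h : G.Adj u w) : deviation G ℓ u w ≤ 1 - ℓ s(u, w) := by
  induction hn : (sideComp G u w).ncard using Nat.strong_induction_on generalizing u w with
  | _ n ih =>
  obtain hd | hd | hd : G.degree w = 1 ∨ G.degree w = 2 ∨ 3 ≤ G.degree w := by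
    have := G.degree_pos_iff_exists_adj w |>.2 ⟨u, h.symm⟩
    omega
  · exact (deviation_of_degree_eq_one ℓ hT h hd).le
  · obtain ⟨v, huv, hN⟩ := exists_adj_iff_of_degree_eq_two h.symm hd
    have hwv : G.Adj w v := (hN v).2 (.inr rfl)
    have hlt : (sideComp G w v).ncard < n := by
      rw [← hn, sideComp_eq_insert_of_adj_iff hT huv hN]
      exact Set.ncard_lt_ncard (Set.ssubset_insert (notMem_sideComp G w v)) (Set.toFinite _)
    rw [deviation_eq_deviation_sub_of_adj_iff ℓ hT huv hN]
    linarith [ih _ hlt hwv rfl, hℓ s(w, v) hwv]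
  · have hsum := deviation_add_deviation_swap ℓ hT h hsb.1
    have hswap : deviation G ℓ w u = sideLeafCount G w u - branchLength G ℓ w u := by
      rw [deviation, sideLength_eq_branchLength ℓ hT h.symm]
    linarith [hsb.2 w u hd h.symm]

end Tree

theorem deviation_lt_one_general [Fintype V] (G : SimpleGraph V)
    (ℓ : Sym2 V → ℝ) (hT : G.IsTree)
    (hℓ : ∀ e ∈ G.edgeSet, 0 < ℓ e) (hsb : ShortBranched G ℓ)
    (u v : V) (huv : u ≠ v) :
    deviation G ℓ u v < 1 := by
  obtain ⟨w, huw, hv⟩ := exists_adj_mem_sideComp hT.connected huv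
  have hdev : deviation G ℓ u v = deviation G ℓ u w := by
    unfold deviation sideLeafCount sideLength
    rw [sideComp_eq_of_mem hv]
  have hle := deviation_le_one_sub ℓ hT (fun e he => (hℓ e he).le) hsb huw
  linarith [hℓ s(u, w) huw]

/-- **Deviations are less than one** (Lemma A.3 of the paper): in a short-branched tree
with strictly positive edge lengths, `D(u,v) < 1` for every pair of distinct vertices. -/
theorem deviation_lt_one [Fintype V] [DecidableEq V] (G : SimpleGraph V)
    (ℓ : Sym2 V → ℝ) (hT : G.IsTree) (hV : 1 < Fintype.card V)
    (hℓ : ∀ e ∈ G.edgeSet, 0 < ℓ e) (hsb : ShortBranched G ℓ)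
    (u v : V) (huv : u ≠ v) :
    deviation G ℓ u v < 1 :=
  deviation_lt_one_general G ℓ hT hℓ hsb u v huv
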